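/- Let G be a connected simple graph, f ≥ 1 a natural number, and u, v vertices with dist(u,v) ≤ f. Suppose there exists a vertex s with dist(v,s) ≤ f+1 and dist(u,s) ≥ f+2. Then there exist at least f−1 vertices q with q ∉ {u,v}, dist(u,q) ≤ f+1, and dist(u,q) ≠ dist(v,q). -/

import Mathlib

open SimpleGraph

private lemma ivt_nat (g : ℕ → ℕ) (h0 : g 0 = 0) (hstep : ∀ t, g (t+1) ≤ g t + 1) :
    ∀ N k, k ≤ g N → ∃ t ≤ N, g t = k := by
  intro N
  induction N with
  | zero => intro k hk; exact ⟨0, le_refl _, by omega⟩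
  | succ n ih =>
    intro k hk
    by_cases h : k ≤ g n
    · obtain ⟨t, ht, hgt⟩ := ih k h
      exact ⟨t, by omega, hgt⟩
    · exact ⟨n + 1, le_refl _, by have := hstep n; omega⟩

private lemma dist_getVert_le {V : Type*} {G : SimpleGraph V} (hG : G.Connected) {a b : V}
    (w : G.Walk a b) (t : ℕ) : G.dist a (w.getVert t) ≤ t := by
  induction t with
  | zero => simp [SimpleGraph.dist_self]
  | succ n ih =>
    by_cases h : n < w.length
    · have hadj := w.adj_getVert_succ h
      have h1 : G.dist (w.getVert n) (w.getVert (n+1)) ≤ 1 := by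
        have := SimpleGraph.dist_le hadj.toWalk
        simpa using this
      calc G.dist a (w.getVert (n+1)) ≤ G.dist a (w.getVert n) +
            G.dist (w.getVert n) (w.getVert (n+1)) := hG.dist_triangle
        _ ≤ n + 1 := by omega
    · rw [w.getVert_of_length_le (by omega), ← w.getVert_of_length_le (show w.length ≤ n by omega)]
      omega

private lemma dist_getVert_eq {V : Type*} {G : SimpleGraph V} (hG : G.Connected) {a b : V}
    (w : G.Walk a b) (hw : w.length = G.dist a b) {t : ℕ} (ht : t ≤ w.length) :
    G.dist a (w.getVert t) = t ∧ G.dist (w.getVert t) b = w.length - t := by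
  have h1 : G.dist a (w.getVert t) ≤ t := dist_getVert_le hG w t
  have h2 : G.dist (w.getVert t) b ≤ w.length - t := by
    have := dist_getVert_le hG w.reverse (w.length - t)
    rw [w.getVert_reverse] at this
    have hh : w.length - (w.length - t) = t := by omega
    rw [hh] at this
    rwa [SimpleGraph.dist_comm]
  have h3 : G.dist a b ≤ G.dist a (w.getVert t) + G.dist (w.getVert t) b := hG.dist_triangle
  omega

/-- In a connected simple graph, if `f ≥ 1`, `dist u v ≤ f`, and there exists a
vertex `s` with `dist v s ≤ f + 1` and `dist u s ≥ f + 2`, then there are at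
least `f - 1` vertices `q ∉ {u, v}` with `dist u q ≤ f + 1` and
`dist u q ≠ dist v q`. -/
theorem many_distinguishing_vertices_of_witness {V : Type*} (G : SimpleGraph V)
    (hG : G.Connected) (f : ℕ) (hf : 1 ≤ f) (u v : V) (huv : G.dist u v ≤ f)
    (s : V) (hvs : G.dist v s ≤ f + 1) (hus : f + 2 ≤ G.dist u s) :
    ∃ Q : Finset V, f - 1 ≤ Q.card ∧
      ∀ q ∈ Q, q ≠ u ∧ q ≠ v ∧ G.dist u q ≤ f + 1 ∧ G.dist u q ≠ G.dist v q := by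
  classical
  set d0 := G.dist u v with hd0
  set d1 := G.dist v s with hd1
  obtain ⟨p, hp⟩ := hG.exists_walk_length_eq_dist u v
  obtain ⟨r, hr⟩ := hG.exists_walk_length_eq_dist v s
  set w := p.append r with hwdef
  have hwlen : w.length = d0 + d1 := by simp [hwdef, hp, hr, hd0, hd1]
  have hDle : G.dist u s ≤ d0 + d1 := hG.dist_triangle
  -- key: for every good k, find a vertex
  set K : Finset ℕ := (Finset.Icc 1 (f+1)) \ {d0, d0/2} with hK
  have hKcard : f - 1 ≤ K.card := by
    have h1 : (Finset.Icc 1 (f+1)).card ≤ K.card + ({d0, d0/2} : Finset ℕ).card :=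
      Finset.card_le_card_sdiff_add_card
    have h2 : ({d0, d0/2} : Finset ℕ).card ≤ 2 := Finset.card_insert_le _ _ |>.trans (by simp)
    have h3 : (Finset.Icc 1 (f+1)).card = f + 1 := by simp
    omega
  have key : ∀ k ∈ K, ∃ x : V, G.dist u x = k ∧ x ≠ u ∧ x ≠ v ∧ G.dist v x ≠ k := by
    intro k hk
    rw [hK, Finset.mem_sdiff, Finset.mem_Icc] at hk
    obtain ⟨⟨hk1, hk2⟩, hknot⟩ := hk
    simp only [Finset.mem_insert, Finset.mem_singleton, not_or] at hknot
    obtain ⟨hknd0, hknd02⟩ := hknot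
    have hk2d0 : 2 * k ≠ d0 := fun h => hknd02 (by omega)
    -- intermediate value
    have h0 : G.dist u (w.getVert 0) = 0 := by simp [SimpleGraph.dist_self]
    have hstep : ∀ t, G.dist u (w.getVert (t+1)) ≤ G.dist u (w.getVert t) + 1 := by
      intro t
      by_cases h : t < w.length
      · have hadj := w.adj_getVert_succ h
        have h1 : G.dist (w.getVert t) (w.getVert (t+1)) ≤ 1 := by
          have := SimpleGraph.dist_le hadj.toWalk
          simpa using this
        have := hG.dist_triangle (u := u) (v := w.getVert t) (w := w.getVert (t+1))
        omega
      · have e1 : w.getVert (t+1) = s := w.getVert_of_length_le (by omega)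
        have e2 : w.getVert t = s := w.getVert_of_length_le (by omega)
        rw [e1, e2]; omega
    have hgL : k ≤ G.dist u (w.getVert w.length) := by
      rw [w.getVert_length]
      omega
    obtain ⟨t, htL, hgt⟩ := ivt_nat (fun t => G.dist u (w.getVert t)) h0 hstep w.length k hgL
    refine ⟨w.getVert t, hgt, ?_, ?_, ?_⟩
    · intro h; rw [h, SimpleGraph.dist_self] at hgt; omega
    · intro h; rw [h] at hgt; exact hknd0 (by rw [← hgt])
    · -- dist v x ≠ k
      rw [Walk.getVert_append] at hgt ⊢
      by_cases hcase : t < p.length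
      · rw [if_pos hcase] at hgt ⊢
        have h1 := dist_getVert_eq hG p hp (le_of_lt hcase)
        have h2 : G.dist v (p.getVert t) = p.length - t := by
          have h3 := dist_getVert_eq hG p.reverse (by
            rw [Walk.length_reverse, SimpleGraph.dist_comm]; exact hp)
            (t := p.length - t) (by rw [Walk.length_reverse]; omega)
          rw [Walk.getVert_reverse] at h3
          have hh : p.length - (p.length - t) = t := by omega
          rw [hh] at h3
          simpa using h3.1
        rw [h2]
        have : t = k := by rw [h1.1] at hgt; exact hgt
        rw [hp] at *
        omega
      · rw [if_neg hcase] at hgt ⊢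
        set j := t - p.length with hj
        have hjle : j ≤ r.length := by
          have : t ≤ w.length := htL
          rw [hwdef, Walk.length_append] at this
          omega
        have h1 := dist_getVert_eq hG r hr hjle
        rw [h1.1]
        -- dist u x ≥ D - (d1 - j) ≥ j + 1 > j
        have h4 : G.dist u s ≤ G.dist u (r.getVert j) + G.dist (r.getVert j) s :=
          hG.dist_triangle
        rw [h1.2, hgt] at h4
        rw [hr] at *
        omega
  choose x hx1 hx2 hx3 hx4 using key
  refine ⟨K.attach.image (fun k => x k.1 k.2), ?_, ?_⟩
  · rw [Finset.card_image_of_injOn, Finset.card_attach]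
    · exact hKcard
    · intro a _ b _ hab
      simp only at hab
      apply Subtype.ext
      have h := congrArg (G.dist u) hab
      rwa [hx1, hx1] at h
  · intro q hq
    simp only [Finset.mem_image, Finset.mem_attach, true_and] at hq
    obtain ⟨⟨k, hk⟩, rfl⟩ := hq
    have hkle : k ≤ f + 1 := by
      rw [hK, Finset.mem_sdiff, Finset.mem_Icc] at hk
      exact hk.1.2
    refine ⟨hx2 k hk, hx3 k hk, ?_, ?_⟩
    · rw [hx1 k hk]; exact hkle
    · rw [hx1 k hk]; exact fun h => hx4 k hk h.symm
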